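/- For all integers k ≥ 1 and n ≥ 1, the number of k-box paths of size n equals binom((k+2)n − 1, n) / ((k+2)n − 1); equivalently, ((k+2)n − 1) times the number of k-box paths of size n equals binom((k+2)n − 1, n). -/

import Mathlib

/-!
A `k`-box path of size `n` is forced to be `U^{a₁} D^k L D U^{a₂} D^k L D ⋯ U^{aₙ} D^k L`: each
box `U D^k L` uses `k + 1` down steps, after its `L` no `U` may follow, so two consecutive boxes
are separated by a further down step, and the semilength `(k+2)n - 1` leaves room for no other
down step. Such a path is determined by the partial sums `a₁ + ⋯ + aᵢ` (`i < n`), an `n`-subset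
of `ℤ/N` with `N = (k+2)n - 1`, and the prefix condition says that this set contains `0` and has
at most `x / (k+2)` elements below each of its elements `x`. As `(k+2)n = N + 1`, exactly one of
the `N` rotations of any `n`-subset `S` has this property (cycle lemma): the one moving to `0` the
first maximum of `y ↦ (k+2)·#{z ∈ S | z < y} - y`. Hence `N` times the number of box paths is
`binom(N, n)`.
-/

/-- The step alphabet for skew Dyck paths: up, down, left. -/
inductive Step : Type
  | U | D | L
  deriving DecidableEq

/-- Number of U steps in a word. -/
def countU (w : List Step) : ℕ := w.count Step.U
/-- Number of D steps in a word. -/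
def countD (w : List Step) : ℕ := w.count Step.D
/-- Number of L steps in a word. -/
def countL (w : List Step) : ℕ := w.count Step.L

/-- A skew Dyck path: every prefix has at least as many U's as D's and L's combined,
the totals balance, and there is no factor `UL` or `LU`. -/
def IsSkewDyck (w : List Step) : Prop :=
  (∀ p, p <+: w → countD p + countL p ≤ countU p) ∧
  countU w = countD w + countL w ∧
  ¬ [Step.U, Step.L] <:+: w ∧ ¬ [Step.L, Step.U] <:+: w

/-- The semilength of a skew Dyck path is its number of U's. -/
def semilength (w : List Step) : ℕ := countU w

/-- The factor `U D^k L`. -/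
def boxFactor (k : ℕ) : List Step := Step.U :: (List.replicate k Step.D ++ [Step.L])

/-- The number of occurrences (starting positions) of `f` as a factor (contiguous
subword) of `w`. -/
def numOccurrences (f w : List Step) : ℕ :=
  ((Finset.range (w.length + 1)).filter (fun i => f <+: w.drop i)).card

/-- A `k`-box path of size `n`: a skew Dyck path of semilength `(k+2)n - 1` with
exactly `n` occurrences of the factor `U D^k L`. -/
def IsBoxPath (k n : ℕ) (w : List Step) : Prop :=
  IsSkewDyck w ∧ semilength w = (k+2)*n - 1 ∧ numOccurrences (boxFactor k) w = n

/-- Number of returns: positions `i` such that the `(i+1)`-st letter is a `D` or `L`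
and the prefix of length `i+1` is balanced (the path returns to the x-axis). -/
def numReturns (w : List Step) : ℕ :=
  ((Finset.range w.length).filter (fun i =>
    (w[i]? = some Step.D ∨ w[i]? = some Step.L) ∧
    countU (w.take (i+1)) = countD (w.take (i+1)) + countL (w.take (i+1)))).card

/-- Number of long ascents: maximal runs of consecutive U's of length at least 2,
counted via their starting positions. -/
def numLongAscents (w : List Step) : ℕ :=
  ((Finset.range w.length).filter (fun i =>
    w[i]? = some Step.U ∧ w[i+1]? = some Step.U ∧
    (i = 0 ∨ w[i-1]? ≠ some Step.U))).card

/-- The word `U^{a_1} D^k L D U^{a_2} D^k L D ⋯ U^{a_{n-1}} D^k L D U^{a_n} D^k L`. -/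
def boxForm (k : ℕ) : List ℕ → List Step
  | [] => []
  | [a] => List.replicate a Step.U ++ List.replicate k Step.D ++ [Step.L]
  | a :: b :: rest =>
      List.replicate a Step.U ++ List.replicate k Step.D ++ [Step.L, Step.D] ++
        boxForm k (b :: rest)

/-- A block `U^b D^{k-1} L D` of an augmented `k`-Dyck path. -/
def augBlock (k b : ℕ) : List Step :=
  List.replicate b Step.U ++ List.replicate (k-1) Step.D ++ [Step.L, Step.D]

/-- The word `U^{b_1} D^{k-1} L D ⋯ U^{b_m} D^{k-1} L D`. -/
def augForm (k : ℕ) (b : List ℕ) : List Step := (b.map (augBlock k)).flatten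

/-- An augmented `k`-Dyck path: a skew Dyck path of the form
`U^{b_1} D^{k-1} L D ⋯ U^{b_m} D^{k-1} L D` with all `b_i` positive. -/
def IsAugmented (k : ℕ) (w : List Step) : Prop :=
  IsSkewDyck w ∧ ∃ b : List ℕ, (∀ x ∈ b, 0 < x) ∧ w = augForm k b

/-- An augmented `k`-Dyck path of size `m`. -/
def IsAugmentedOfSize (k m : ℕ) (w : List Step) : Prop :=
  IsSkewDyck w ∧ ∃ b : List ℕ, b.length = m ∧ (∀ x ∈ b, 0 < x) ∧ w = augForm k b

/-- A tailed `k`-box path ends with the factor `U^{k+1} D^k L`. -/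
def Tailed (k : ℕ) (w : List Step) : Prop :=
  (List.replicate (k+1) Step.U ++ List.replicate k Step.D ++ [Step.L]) <:+ w

open Step

def downs (w : List Step) : ℕ := countD w + countL w

@[simp] lemma countU_nil : countU [] = 0 := rfl

@[simp] lemma countU_cons (c : Step) (w : List Step) :
    countU (c :: w) = countU w + if c = U then 1 else 0 := by
  cases c <;> simp [countU]

@[simp] lemma countU_append (x y : List Step) : countU (x ++ y) = countU x + countU y :=
  List.count_append

@[simp] lemma countU_replicate (a : ℕ) (c : Step) :
    countU (List.replicate a c) = if c = U then a else 0 := by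
  cases c <;> simp [countU, List.count_replicate]

@[simp] lemma downs_nil : downs [] = 0 := rfl

@[simp] lemma downs_cons (c : Step) (w : List Step) :
    downs (c :: w) = downs w + if c = U then 0 else 1 := by
  cases c <;> simp [downs, countD, countL] <;> omega

@[simp] lemma downs_append (x y : List Step) : downs (x ++ y) = downs x + downs y := by
  simp [downs, countD, countL]; omega

@[simp] lemma downs_replicate (a : ℕ) (c : Step) :
    downs (List.replicate a c) = if c = U then 0 else a := by
  cases c <;> simp [downs, countD, countL, List.count_replicate]

lemma countU_add_downs (w : List Step) : countU w + downs w = w.length := by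
  induction w with
  | nil => rfl
  | cons c w ih => cases c <;> simp <;> omega

/-- `w`, read as a path starting at height `h`, ends at height `h'` and never goes below
height `0`. -/
def IsWalk (h h' : ℕ) (w : List Step) : Prop :=
  (∀ p, p <+: w → downs p ≤ countU p + h) ∧ countU w + h = downs w + h'

lemma isWalk_nil {h h' : ℕ} : IsWalk h h' [] ↔ h = h' := by
  simp [IsWalk]

lemma IsWalk.append {h h' h'' : ℕ} {x y : List Step} (hx : IsWalk h h' x)
    (hy : IsWalk h' h'' y) : IsWalk h h'' (x ++ y) := by
  have hbx := hx.2
  have hby := hy.2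
  refine ⟨fun p hp => ?_, by simp; omega⟩
  obtain ⟨t, ht⟩ := hp
  rcases List.append_eq_append_iff.mp ht with ⟨a, rfl, -⟩ | ⟨c, rfl, hc⟩
  · exact hx.1 p ⟨a, rfl⟩
  · have := hy.1 c ⟨t, hc.symm⟩
    simp; omega

lemma isWalk_append_iff {h h'' : ℕ} {x y : List Step} :
    IsWalk h h'' (x ++ y) ↔ ∃ h', IsWalk h h' x ∧ IsWalk h' h'' y := by
  refine ⟨fun hw => ?_, fun ⟨_, hx, hy⟩ => hx.append hy⟩
  have hx := hw.1 x (List.prefix_append x y)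
  refine ⟨countU x + h - downs x, ⟨fun p hp => hw.1 p (hp.trans (List.prefix_append x y)),
    by omega⟩, fun p hp => ?_, ?_⟩
  · have := hw.1 (x ++ p) (List.prefix_append_right_inj x |>.mpr hp)
    simp at this; omega
  · have := hw.2; simp at this; omega

lemma IsWalk.of_U_cons {h h'' : ℕ} {w : List Step} (hw : IsWalk h h'' (U :: w)) :
    IsWalk (h + 1) h'' w := by
  obtain ⟨h', hU, hw⟩ := isWalk_append_iff (x := [U]).mp hw
  obtain rfl : h' = h + 1 := by have := hU.2; simp at this; omega
  exact hw

lemma IsWalk.of_cons_of_ne_U {h h'' : ℕ} {c : Step} {w : List Step} (hc : c ≠ U)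
    (hw : IsWalk h h'' (c :: w)) : ∃ h', h = h' + 1 ∧ IsWalk h' h'' w := by
  obtain ⟨h', hc', hw⟩ := isWalk_append_iff (x := [c]).mp hw
  exact ⟨h', by have := hc'.2; simp [hc] at this; omega, hw⟩

lemma isWalk_of_length_le {h h' : ℕ} {w : List Step} (hlen : w.length ≤ h)
    (hbal : countU w + h = downs w + h') : IsWalk h h' w := by
  refine ⟨fun p hp => ?_, hbal⟩
  have := countU_add_downs p
  have := hp.length_le
  omega

lemma isWalk_replicate_U (h a : ℕ) : IsWalk h (h + a) (List.replicate a U) := by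
  refine ⟨fun p hp => ?_, by simp; omega⟩
  have hU : p = List.replicate p.length U :=
    List.eq_replicate_iff.mpr ⟨rfl, fun x hx => List.eq_of_mem_replicate (hp.subset hx)⟩
  rw [hU]
  simp

def NoTurn (w : List Step) : Prop := ¬ [U, L] <:+: w ∧ ¬ [L, U] <:+: w

lemma NoTurn.mono {v w : List Step} (hw : NoTurn w) (hv : v <:+: w) : NoTurn v :=
  ⟨fun h => hw.1 (h.trans hv), fun h => hw.2 (h.trans hv)⟩

lemma isSkewDyck_iff {w : List Step} : IsSkewDyck w ↔ IsWalk 0 0 w ∧ NoTurn w := by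
  simp only [IsSkewDyck, IsWalk, NoTurn, downs]
  constructor
  · rintro ⟨hp, hb, hUL, hLU⟩
    exact ⟨⟨fun p h => by simpa using hp p h, by omega⟩, hUL, hLU⟩
  · rintro ⟨⟨hp, hb⟩, hUL, hLU⟩
    exact ⟨fun p h => by simpa using hp p h, by omega, hUL, hLU⟩

lemma numOccurrences_nil {f : List Step} (hf : f ≠ []) : numOccurrences f [] = 0 := by
  simp [numOccurrences, List.prefix_nil, hf]

lemma numOccurrences_boxFactor_nil (k : ℕ) : numOccurrences (boxFactor k) [] = 0 :=
  numOccurrences_nil (by simp [boxFactor])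

lemma numOccurrences_cons (f : List Step) (c : Step) (w : List Step) :
    numOccurrences f (c :: w) = numOccurrences f w + if f <+: c :: w then 1 else 0 := by
  simp only [numOccurrences, Finset.card_filter, List.length_cons,
    Finset.sum_range_succ' _ (w.length + 1), List.drop_succ_cons, List.drop_zero]

lemma numOccurrences_boxFactor_cons {k : ℕ} {c : Step} (hc : c ≠ U) (w : List Step) :
    numOccurrences (boxFactor k) (c :: w) = numOccurrences (boxFactor k) w := by
  have : ¬ boxFactor k <+: c :: w := by simp [boxFactor, Ne.symm hc]
  rw [numOccurrences_cons, if_neg this, add_zero]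

lemma numOccurrences_boxFactor_append (k : ℕ) (w : List Step) :
    numOccurrences (boxFactor k) (boxFactor k ++ w) = numOccurrences (boxFactor k) w + 1 := by
  have hD : ∀ j, numOccurrences (boxFactor k) (List.replicate j D ++ L :: w) =
      numOccurrences (boxFactor k) w := by
    intro j
    induction j with
    | zero => exact numOccurrences_boxFactor_cons (by simp) w
    | succ j ih => rw [List.replicate_succ, List.cons_append,
        numOccurrences_boxFactor_cons (by simp), ih]
  have hw : boxFactor k ++ w = U :: (List.replicate k D ++ L :: w) := by simp [boxFactor]
  rw [hw, numOccurrences_cons, hD, if_pos (hw ▸ List.prefix_append _ _)]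

lemma IsWalk.of_boxFactor_append {k h h'' : ℕ} {w : List Step}
    (hw : IsWalk h h'' (boxFactor k ++ w)) : ∃ h', h = h' + k ∧ IsWalk h' h'' w := by
  obtain ⟨h', hbox, hw⟩ := isWalk_append_iff.mp hw
  exact ⟨h', by have := hbox.2; simp [boxFactor] at this; omega, hw⟩

lemma boxForm_cons_succ (k a : ℕ) (r : List ℕ) :
    boxForm k ((a + 1) :: r) = U :: boxForm k (a :: r) := by
  cases r <;> simp [boxForm, List.replicate_succ]

lemma boxForm_cons_cons (k a b : ℕ) (r : List ℕ) :
    boxForm k (a :: b :: r) =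
      List.replicate a U ++ (List.replicate k D ++ [L, D]) ++ boxForm k (b :: r) := by
  simp [boxForm]

def IsBoxForm (k : ℕ) (w : List Step) : Prop :=
  ∃ b : List ℕ, (∀ x ∈ b, 0 < x) ∧ w = boxForm k b

lemma isBoxForm_boxFactor (k : ℕ) : IsBoxForm k (boxFactor k) :=
  ⟨[1], by simp, by simp [boxForm, boxFactor]⟩

lemma IsBoxForm.exists_eq_U_cons {k : ℕ} {w : List Step} (hw : IsBoxForm k w) (hne : w ≠ []) :
    ∃ t, w = U :: t := by
  obtain ⟨_ | ⟨a, r⟩, hpos, rfl⟩ := hw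
  · exact absurd rfl hne
  · obtain ⟨a, rfl⟩ := Nat.exists_eq_succ_of_ne_zero (hpos a (by simp)).ne'
    exact ⟨_, boxForm_cons_succ k a r⟩

lemma IsBoxForm.U_cons {k : ℕ} {w : List Step} (hw : IsBoxForm k w) (hne : w ≠ []) :
    IsBoxForm k (U :: w) := by
  obtain ⟨_ | ⟨a, r⟩, hpos, rfl⟩ := hw
  · exact absurd rfl hne
  · refine ⟨(a + 1) :: r, fun x hx => ?_, (boxForm_cons_succ k a r).symm⟩
    rcases List.mem_cons.mp hx with rfl | hx
    · omega
    · exact hpos x (List.mem_cons_of_mem a hx)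

lemma IsBoxForm.boxFactor_append_D_cons {k : ℕ} {w : List Step} (hw : IsBoxForm k w)
    (hne : w ≠ []) : IsBoxForm k (boxFactor k ++ D :: w) := by
  obtain ⟨_ | ⟨a, r⟩, hpos, rfl⟩ := hw
  · exact absurd rfl hne
  · refine ⟨1 :: a :: r, fun x hx => ?_, by simp [boxForm, boxFactor]⟩
    rcases List.mem_cons.mp hx with rfl | hx
    · omega
    · exact hpos x hx

def BoxBound (k h : ℕ) (w : List Step) : Prop :=
  (k + 2) * numOccurrences (boxFactor k) w ≤ countU w + h + 1 ∧
    ((k + 2) * numOccurrences (boxFactor k) w = countU w + h + 1 → IsBoxForm k w)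

lemma boxBound_of_lt {k h : ℕ} {w : List Step}
    (hlt : (k + 2) * numOccurrences (boxFactor k) w < countU w + h + 1) : BoxBound k h w :=
  ⟨hlt.le, fun heq => absurd heq hlt.ne⟩

lemma boxBound_nil (k : ℕ) : BoxBound k 0 [] :=
  boxBound_of_lt (by simp [numOccurrences_boxFactor_nil k])

lemma boxBound_boxFactor (k : ℕ) : BoxBound k k (boxFactor k) := by
  have hocc := numOccurrences_boxFactor_append k []
  rw [List.append_nil, numOccurrences_boxFactor_nil] at hocc
  refine ⟨?_, fun _ => isBoxForm_boxFactor k⟩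
  rw [hocc]
  simp [boxFactor]

lemma BoxBound.cons_of_ne_U {k h : ℕ} {c : Step} {w : List Step} (hc : c ≠ U)
    (hw : BoxBound k h w) : BoxBound k (h + 1) (c :: w) := by
  apply boxBound_of_lt
  rw [numOccurrences_boxFactor_cons hc]
  have := hw.1
  simp [hc]
  omega

lemma BoxBound.U_cons {k h : ℕ} {w : List Step} (hbox : ¬ boxFactor k <+: U :: w)
    (hw : BoxBound k (h + 1) w) : BoxBound k h (U :: w) := by
  have hocc : numOccurrences (boxFactor k) (U :: w) = numOccurrences (boxFactor k) w := by
    rw [numOccurrences_cons, if_neg hbox, add_zero]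
  have hU : countU (U :: w) = countU w + 1 := by simp
  rw [BoxBound, hocc, hU]
  refine ⟨by have := hw.1; omega, fun heq => ?_⟩
  refine (hw.2 (by omega)).U_cons fun hnil => ?_
  subst hnil
  simp [numOccurrences_boxFactor_nil k] at heq

/-- The letter after a box is a down step lying in no box; this is where `k + 2` rather than
`k + 1` comes from. -/
lemma BoxBound.boxFactor_append_cons {k h : ℕ} {c : Step} {w : List Step}
    (hc : c ≠ U) (hL : c = L → ∀ t, w ≠ U :: t) (hw : BoxBound k h w) :
    BoxBound k (h + 1 + k) (boxFactor k ++ c :: w) := by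
  have hocc := numOccurrences_boxFactor_append k (c :: w)
  rw [numOccurrences_boxFactor_cons hc] at hocc
  have hU : countU (boxFactor k ++ c :: w) = countU w + 1 := by simp [boxFactor, hc]
  rw [BoxBound, hocc, hU]
  refine ⟨by nlinarith [hw.1], fun heq => ?_⟩
  have htight := hw.2 (by nlinarith)
  have hne : w ≠ [] := by
    rintro rfl
    simp [numOccurrences_boxFactor_nil k] at heq
    omega
  cases c
  · exact absurd rfl hc
  · exact htight.boxFactor_append_D_cons hne
  · obtain ⟨t, rfl⟩ := htight.exists_eq_U_cons hne
    exact absurd rfl (hL rfl t)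

theorem IsWalk.boxBound (k : ℕ) {h : ℕ} {w : List Step} (hw : IsWalk h 0 w) (hn : NoTurn w) :
    BoxBound k h w := by
  induction hlen : w.length using Nat.strong_induction_on generalizing w h with
  | _ len ih =>
  subst hlen
  rcases w with _ | ⟨c, w⟩
  · rw [isWalk_nil.mp hw]
    exact boxBound_nil k
  have hn₁ : NoTurn w := hn.mono (List.suffix_cons c w).isInfix
  by_cases hcU : c ≠ U
  · obtain ⟨h₁, rfl, hw₁⟩ := hw.of_cons_of_ne_U hcU
    exact (ih _ (by simp) hw₁ hn₁ rfl).cons_of_ne_U hcU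
  obtain rfl := not_not.mp hcU
  by_cases hbox : ¬ boxFactor k <+: U :: w
  · exact (ih _ (by simp) hw.of_U_cons hn₁ rfl).U_cons hbox
  obtain ⟨w₂, hw₂⟩ := not_not.mp hbox
  rw [← hw₂] at hn hw ⊢
  obtain ⟨h₂, rfl, hw₂'⟩ := hw.of_boxFactor_append
  rcases w₂ with _ | ⟨c, w₃⟩
  · rw [isWalk_nil.mp hw₂', List.append_nil, zero_add]
    exact boxBound_boxFactor k
  have hcU : c ≠ U := by
    rintro rfl
    exact hn.2 ⟨U :: List.replicate k D, w₃, by simp [boxFactor]⟩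
  obtain ⟨h₃, rfl, hw₃⟩ := hw₂'.of_cons_of_ne_U hcU
  have hL : c = L → ∀ t, w₃ ≠ U :: t := by
    rintro rfl t rfl
    exact hn.2 ⟨boxFactor k, t, by simp⟩
  have hlen : w₃.length < (U :: w).length := by rw [← hw₂]; simp [boxFactor]; omega
  have hn₃ : NoTurn w₃ := hn.mono ((List.suffix_cons c w₃).trans (List.suffix_append _ _)).isInfix
  exact (ih _ hlen hw₃ hn₃ rfl).boxFactor_append_cons hcU hL

lemma countU_boxForm (k : ℕ) (b : List ℕ) : countU (boxForm k b) = b.sum := by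
  induction b using boxForm.induct with
  | case1 => rfl
  | case2 a => simp [boxForm]
  | case3 a b r ih => simp [boxForm, ih]

lemma numOccurrences_boxFactor_U_cons_U (k : ℕ) (w : List Step) :
    numOccurrences (boxFactor k) (U :: U :: w) = numOccurrences (boxFactor k) (U :: w) := by
  have : ¬ boxFactor k <+: U :: U :: w := by cases k <;> simp [boxFactor, List.replicate_succ]
  rw [numOccurrences_cons, if_neg this, add_zero]

lemma numOccurrences_boxFactor_replicate_U_append (k a : ℕ) (w : List Step) :
    numOccurrences (boxFactor k) (List.replicate a U ++ U :: w) =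
      numOccurrences (boxFactor k) (U :: w) := by
  induction a generalizing w with
  | zero => rfl
  | succ a ih =>
    rw [List.replicate_succ', List.append_assoc, List.singleton_append, ih,
      numOccurrences_boxFactor_U_cons_U]

lemma numOccurrences_boxForm (k : ℕ) {b : List ℕ} (hpos : ∀ x ∈ b, 0 < x) :
    numOccurrences (boxFactor k) (boxForm k b) = b.length := by
  induction b using boxForm.induct with
  | case1 => exact numOccurrences_boxFactor_nil k
  | case2 a =>
    obtain ⟨a, rfl⟩ := Nat.exists_eq_succ_of_ne_zero (hpos a (by simp)).ne'
    have := numOccurrences_boxFactor_append k []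
    rw [numOccurrences_boxFactor_nil] at this
    rw [show boxForm k [a + 1] = List.replicate a U ++ U :: (List.replicate k D ++ [L]) by
      simp [boxForm, List.replicate_succ'], numOccurrences_boxFactor_replicate_U_append]
    simpa [boxFactor] using this
  | case3 a b r ih =>
    obtain ⟨a, rfl⟩ := Nat.exists_eq_succ_of_ne_zero (hpos a (by simp)).ne'
    have := numOccurrences_boxFactor_append k (D :: boxForm k (b :: r))
    rw [numOccurrences_boxFactor_cons (by simp), ih fun x hx => hpos x (by simp_all)] at this
    rw [show boxForm k ((a + 1) :: b :: r) =
      List.replicate a U ++ U :: (List.replicate k D ++ L :: D :: boxForm k (b :: r)) by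
      simp [boxForm, List.replicate_succ'], numOccurrences_boxFactor_replicate_U_append]
    simpa [boxFactor] using this

lemma replicate_append_inj {α : Type*} {c : α} {a a' : ℕ} {x y : List α}
    (hx : x.head? ≠ some c) (hy : y.head? ≠ some c)
    (h : List.replicate a c ++ x = List.replicate a' c ++ y) : a = a' ∧ x = y := by
  induction a generalizing a' with
  | zero =>
    cases a' with
    | zero => exact ⟨rfl, h⟩
    | succ a' => simp [List.replicate_succ] at h; simp [h] at hx
  | succ a ih =>
    cases a' with
    | zero => simp [List.replicate_succ] at h; simp [← h] at hy
    | succ a' =>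
      obtain ⟨rfl, hxy⟩ := ih (List.cons_injective (h.trans rfl))
      exact ⟨rfl, hxy⟩

lemma boxForm_cons (k a : ℕ) (r : List ℕ) :
    boxForm k (a :: r) = List.replicate a U ++
      (List.replicate k D ++ L :: if r = [] then [] else D :: boxForm k r) := by
  cases r <;> simp [boxForm]

lemma boxForm_injective (k : ℕ) : Function.Injective (boxForm k) := by
  have hhead : ∀ t, (List.replicate k D ++ L :: t).head? ≠ some U := by
    intro t; cases k <;> simp [List.replicate_succ]
  intro b c h
  induction b generalizing c with
  | nil =>
    cases c with
    | nil => rfl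
    | cons a s => rw [boxForm_cons] at h; simp [boxForm] at h
  | cons a r ih =>
    cases c with
    | nil => simp [boxForm_cons, boxForm] at h
    | cons a' s =>
      rw [boxForm_cons, boxForm_cons] at h
      obtain ⟨rfl, htail⟩ := replicate_append_inj (hhead _) (hhead _) h
      simp only [List.append_cancel_left_eq, List.cons.injEq, true_and] at htail
      by_cases hr : r = [] <;> by_cases hs : s = []
      · rw [hr, hs]
      · simp [hr, hs] at htail
      · simp [hr, hs] at htail
      · simp only [hr, hs, if_false, List.cons.injEq, true_and] at htail
        rw [ih htail]

lemma noTurn_boxForm {k : ℕ} (hk : 1 ≤ k) (b : List ℕ) : NoTurn (boxForm k b) := by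
  let R : Step → Step → Prop := fun x y => x = D ∨ y = D ∨ x = y
  suffices hR : (boxForm k b).IsChain R by
    refine ⟨fun h => ?_, fun h => ?_⟩ <;> simpa [R] using hR.infix h
  obtain ⟨k, rfl⟩ := Nat.exists_eq_add_of_le' hk
  induction b using boxForm.induct with
  | case1 => simp [boxForm]
  | case2 a =>
    simp [boxForm, List.isChain_append, List.isChain_replicate_of_rel, List.isChain_cons,
      List.getLast?_replicate, List.head?_replicate, R]
  | case3 a b r ih =>
    simp [boxForm, List.isChain_append, List.isChain_replicate_of_rel, List.isChain_cons,
      List.getLast?_replicate, List.head?_replicate, R]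
    simpa [R] using ih

lemma isWalk_boxForm {k : ℕ} {b : List ℕ} (hb : b ≠ []) {h h' : ℕ}
    (hmid : ∀ i < b.length, (k + 2) * i ≤ h + (b.take i).sum)
    (hbal : h + b.sum + 1 = (k + 2) * b.length + h') : IsWalk h h' (boxForm k b) := by
  induction b using boxForm.induct generalizing h with
  | case1 => exact absurd rfl hb
  | case2 a =>
    simp only [List.sum_cons, List.sum_nil, List.length_singleton] at hbal
    rw [show boxForm k [a] = List.replicate a U ++ (List.replicate k D ++ [L]) by simp [boxForm]]
    exact (isWalk_replicate_U h a).append (isWalk_of_length_le (by simp; omega) (by simp; omega))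
  | case3 a b r ih =>
    obtain ⟨H, hH⟩ : ∃ H, h + a = H + (k + 2) := ⟨h + a - (k + 2), by
      have := hmid 1 (by simp); simp at this; omega⟩
    rw [boxForm_cons_cons]
    refine ((isWalk_replicate_U h a).append (isWalk_of_length_le (h' := H) (by simp; omega)
      (by simp; omega))).append (ih (List.cons_ne_nil b r) (fun i hi => ?_) ?_)
    · have := hmid (i + 1) (by simp at hi ⊢; omega)
      simp only [List.take_succ_cons, List.sum_cons] at this
      linarith
    · simp only [List.sum_cons, List.length_cons] at hbal ⊢
      linarith

lemma exists_prefix_boxForm (k : ℕ) {b : List ℕ} {i : ℕ} (hi : i < b.length) :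
    ∃ p, p <+: boxForm k b ∧ countU p = (b.take i).sum ∧ downs p = (k + 2) * i := by
  induction b using boxForm.induct generalizing i with
  | case1 => simp at hi
  | case2 a =>
    obtain rfl : i = 0 := by simpa using hi
    exact ⟨[], List.nil_prefix, by simp, by simp⟩
  | case3 a b r ih =>
    rcases i with _ | i
    · exact ⟨[], List.nil_prefix, by simp, by simp⟩
    obtain ⟨p, hp, hU, hdowns⟩ := ih (i := i) (by simp at hi ⊢; omega)
    refine ⟨List.replicate a U ++ (List.replicate k D ++ [L, D]) ++ p, ?_, ?_, ?_⟩
    · rw [boxForm_cons_cons]; exact (List.prefix_append_right_inj _).mpr hp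
    · simp [hU]
    · simp [hdowns]; ring

structure IsBallot (q N : ℕ) (b : List ℕ) : Prop where
  pos : ∀ x ∈ b, 0 < x
  sum_eq : b.sum = N
  le_sum_take : ∀ i < b.length, q * i ≤ (b.take i).sum

theorem isBoxPath_iff {k n : ℕ} (hk : 1 ≤ k) (hn : 1 ≤ n) {w : List Step} :
    IsBoxPath k n w ↔
      ∃ b, b.length = n ∧ IsBallot (k + 2) ((k + 2) * n - 1) b ∧ w = boxForm k b := by
  have hpos : 1 ≤ (k + 2) * n := Nat.one_le_iff_ne_zero.mpr (by positivity)
  constructor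
  · rintro ⟨hw, hU, hocc⟩
    obtain ⟨hwalk, hturn⟩ := isSkewDyck_iff.mp hw
    rw [semilength] at hU
    obtain ⟨b, hbpos, rfl⟩ := (hwalk.boxBound k hturn).2 (by rw [hocc, hU]; omega)
    rw [numOccurrences_boxForm k hbpos] at hocc
    refine ⟨b, hocc, ⟨hbpos, by rw [← countU_boxForm k, hU], fun i hi => ?_⟩, rfl⟩
    obtain ⟨p, hp, hpU, hpdowns⟩ := exists_prefix_boxForm k hi
    have := hwalk.1 p hp
    omega
  · rintro ⟨b, rfl, hb, rfl⟩
    have hne : b ≠ [] := List.ne_nil_of_length_pos (by omega)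
    have hU : countU (boxForm k b) = (k + 2) * b.length - 1 := by rw [countU_boxForm, hb.sum_eq]
    refine ⟨isSkewDyck_iff.mpr ⟨isWalk_boxForm hne (by simpa using hb.le_sum_take) ?_,
      noTurn_boxForm hk b⟩, hU, numOccurrences_boxForm k hb.pos⟩
    rw [hb.sum_eq]; omega

section CycleLemma

open Finset Pointwise

lemma existsUnique_first_max {α β : Type*} [LinearOrder α] [LinearOrder β] {S : Finset α}
    (hS : S.Nonempty) (g : α → β) :
    ∃! s, s ∈ S ∧ ∀ y ∈ S, g y ≤ g s ∧ (y < s → g y < g s) := by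
  obtain ⟨m, hm, hmax⟩ := S.exists_max_image g hS
  obtain ⟨s, hs, hmin⟩ := {y ∈ S | g y = g m}.exists_min_image id ⟨m, by simp [hm]⟩
  rw [mem_filter] at hs
  refine ⟨s, ⟨hs.1, fun y hy => ⟨hs.2 ▸ hmax y hy, fun hys => ?_⟩⟩, ?_⟩
  · refine lt_of_le_of_ne (hs.2 ▸ hmax y hy) fun hgy => ?_
    exact absurd (hmin y (by simp [hy, hgy, hs.2])) (not_le.mpr hys)
  · rintro x ⟨hx, hxmax⟩
    rcases lt_trichotomy x s with hxs | rfl | hsx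
    · have hgx : g x = g m := le_antisymm (hmax x hx) (hxmax m hm).1
      exact absurd (hmin x (by simp [hx, hgx])) (not_le.mpr hxs)
    · rfl
    · exact absurd ((hxmax s hs.1).2 hsx) (not_lt.mpr (hs.2 ▸ hmax x hx))

variable {N : ℕ}

lemma Fin.intCast_val_sub (z s : Fin N) :
    (((z - s : Fin N) : ℕ) : ℤ) = z - s + if z < s then (N : ℤ) else 0 := by
  split_ifs with h
  · rw [Fin.coe_sub_iff_lt.mpr h]; have := s.isLt; omega
  · rw [Fin.coe_sub_iff_le.mpr (not_lt.mp h)]; have := Fin.le_def.mp (not_lt.mp h); omega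

lemma card_filter_sub_lt_sub (S : Finset (Fin N)) (s y : Fin N) :
    (#{z ∈ S | z - s < y - s} : ℤ) =
      #{z ∈ S | z < y} - #{z ∈ S | z < s} + if y < s then (#S : ℤ) else 0 := by
  have hpoint : ∀ z : Fin N, (if z - s < y - s then 1 else 0 : ℤ) =
      (if z < y then 1 else 0) - (if z < s then 1 else 0) + if y < s then 1 else 0 := by
    intro z
    have hz := Fin.intCast_val_sub z s
    have hy := Fin.intCast_val_sub y s
    simp only [Fin.lt_def] at hz hy ⊢
    have := z.isLt; have := y.isLt
    split_ifs at hz hy ⊢ <;> omega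
  simp only [natCast_card_filter, sum_congr rfl fun z _ => hpoint z, sum_add_distrib,
    sum_sub_distrib, sum_const, nsmul_eq_mul]
  split_ifs <;> simp

variable [NeZero N]

def IsAdmissible (q : ℕ) (T : Finset (Fin N)) : Prop :=
  0 ∈ T ∧ ∀ x ∈ T, q * #{y ∈ T | y < x} ≤ x

instance (q : ℕ) : DecidablePred (IsAdmissible (N := N) q) := fun _ => by
  unfold IsAdmissible; infer_instance

def gain (q : ℕ) (S : Finset (Fin N)) (y : Fin N) : ℤ := q * #{z ∈ S | z < y} - y

lemma isAdmissible_neg_vadd_iff {q n : ℕ} (hqn : q * n = N + 1) {S : Finset (Fin N)}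
    (hS : #S = n) {s : Fin N} (hs : s ∈ S) :
    IsAdmissible q (-s +ᵥ S) ↔
      ∀ y ∈ S, gain q S y ≤ gain q S s ∧ (y < s → gain q S y < gain q S s) := by
  have himage : -s +ᵥ S = S.image (· - s) := by
    simp [← image_vadd, vadd_eq_add, neg_add_eq_sub]
  have hkey : ∀ y, q * #{z ∈ -s +ᵥ S | z < y - s} ≤ ((y - s : Fin N) : ℕ) ↔
      gain q S y + (if y < s then 1 else 0) ≤ gain q S s := by
    intro y
    have hc := card_filter_sub_lt_sub S s y
    rw [himage, filter_image, card_image_of_injective _ sub_left_injective]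
    rw [← @Nat.cast_le ℤ, Nat.cast_mul, hc, Fin.intCast_val_sub, gain, gain, hS]
    have hqn' : (q : ℤ) * n = N + 1 := by exact_mod_cast hqn
    split_ifs <;> constructor <;> intro <;> linarith
  have hmem : ∀ x, x ∈ -s +ᵥ S ↔ ∃ y ∈ S, y - s = x := by simp [himage]
  constructor
  · rintro ⟨-, hadm⟩ y hy
    have := (hkey y).mp (hadm (y - s) ((hmem _).mpr ⟨y, hy, rfl⟩))
    split_ifs at this with h
    · exact ⟨by linarith, fun _ => by linarith⟩
    · exact ⟨by simpa using this, fun h' => absurd h' h⟩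
  · intro hmax
    refine ⟨(hmem 0).mpr ⟨s, hs, sub_self s⟩, fun x hx => ?_⟩
    obtain ⟨y, hy, rfl⟩ := (hmem x).mp hx
    refine (hkey y).mpr ?_
    split_ifs with h
    · linarith [(hmax y hy).2 h]
    · simpa using (hmax y hy).1

theorem existsUnique_isAdmissible_vadd {q n : ℕ} (hqn : q * n = N + 1) {S : Finset (Fin N)}
    (hS : #S = n) : ∃! r : Fin N, IsAdmissible q (r +ᵥ S) := by
  have hne : S.Nonempty := card_pos.mp (hS ▸ Nat.pos_of_mul_pos_left (by omega : 0 < q * n))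
  obtain ⟨s, ⟨hs, hmax⟩, huniq⟩ := existsUnique_first_max hne (gain q S)
  refine ⟨-s, (isAdmissible_neg_vadd_iff hqn hS hs).mpr hmax, fun r hr => ?_⟩
  obtain ⟨x, hx, hrx⟩ := mem_vadd_finset.mp hr.1
  obtain rfl : r = -x := eq_neg_of_add_eq_zero_left hrx
  rw [huniq x ⟨hx, (isAdmissible_neg_vadd_iff hqn hS hx).mp hr⟩]

theorem card_mul_card_isAdmissible {q n : ℕ} (hqn : q * n = N + 1) :
    N * #{T ∈ powersetCard n (univ : Finset (Fin N)) | IsAdmissible q T} = N.choose n := by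
  set G := {T ∈ powersetCard n (univ : Finset (Fin N)) | IsAdmissible q T}
  have hG : ∀ {T}, T ∈ G ↔ #T = n ∧ IsAdmissible q T := by simp [G]
  have hN : N * #G = #((univ : Finset (Fin N)) ×ˢ G) := by
    rw [card_product, card_univ, Fintype.card_fin]
  have hchoose : N.choose n = #(powersetCard n (univ : Finset (Fin N))) := by
    rw [card_powersetCard, card_univ, Fintype.card_fin]
  rw [hN, hchoose]
  refine card_bij (fun p _ => p.1 +ᵥ p.2) (fun p hp => ?_) (fun ⟨r, T⟩ hp ⟨r', T'⟩ hp' h => ?_)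
    fun S hS => ?_
  · simpa [card_vadd_finset] using (hG.mp (mem_product.mp hp).2).1
  · obtain ⟨hT, hTadm⟩ := hG.mp (mem_product.mp hp).2
    obtain ⟨-, hT'adm⟩ := hG.mp (mem_product.mp hp').2
    have hT' : T' = (-r' + r) +ᵥ T := by rw [← vadd_vadd, h, neg_vadd_vadd]
    have hr : -r' + r = 0 :=
      (existsUnique_isAdmissible_vadd hqn hT).unique (hT' ▸ hT'adm) (by rwa [zero_vadd])
    rw [hT', hr, zero_vadd, neg_add_eq_zero.mp hr]
  · have hScard := (mem_powersetCard.mp hS).2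
    obtain ⟨r, hr, -⟩ := existsUnique_isAdmissible_vadd hqn hScard
    exact ⟨(-r, r +ᵥ S), mem_product.mpr ⟨mem_univ _, hG.mpr ⟨by rwa [card_vadd_finset], hr⟩⟩,
      neg_vadd_vadd r S⟩

end CycleLemma

section Ballot

open Finset

lemma sum_take_lt_sum_take {b : List ℕ} (hpos : ∀ x ∈ b, 0 < x) {i j : ℕ} (hij : i < j)
    (hj : j ≤ b.length) : (b.take i).sum < (b.take j).sum := by
  have hsplit := List.take_append_drop i (b.take j)
  rw [List.take_take, min_eq_left hij.le] at hsplit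
  rw [← hsplit, List.sum_append, lt_add_iff_pos_right]
  refine List.sum_pos _ (fun x hx => hpos x ?_) ?_
  · exact List.mem_of_mem_take (List.mem_of_mem_drop hx)
  · simp; omega

lemma eq_of_sum_take_eq {b b' : List ℕ} (hlen : b.length = b'.length)
    (h : ∀ i ≤ b.length, (b.take i).sum = (b'.take i).sum) : b = b' := by
  refine List.ext_getElem hlen fun i h₁ h₂ => ?_
  have := h (i + 1) h₁
  rw [List.sum_take_succ _ _ h₁, List.sum_take_succ _ _ h₂, h i h₁.le] at this
  omega

lemma exists_sum_take_eq (f : ℕ → ℕ) (n : ℕ) (hf : ∀ i < n, f i < f (i + 1)) (h0 : f 0 = 0) :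
    ∃ b : List ℕ, b.length = n ∧ (∀ x ∈ b, 0 < x) ∧ ∀ i ≤ n, (b.take i).sum = f i := by
  refine ⟨(List.range n).map fun i => f (i + 1) - f i, by simp, ?_, fun i hi => ?_⟩
  · simp only [List.mem_map, List.mem_range]
    rintro _ ⟨i, hi, rfl⟩
    exact Nat.sub_pos_of_lt (hf i hi)
  · induction i with
    | zero => simp [h0]
    | succ i ih =>
      rw [List.sum_take_succ _ _ (by simp; omega), ih (by omega)]
      simp only [List.getElem_map, List.getElem_range]
      have := hf i (by omega)
      omega

variable {N : ℕ}

lemma card_filter_lt_image_of_strictMono {α : Type*} [LinearOrder α] {n : ℕ} {t : Fin n → α}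
    (ht : StrictMono t) (i : Fin n) : #{y ∈ univ.image t | y < t i} = i := by
  rw [filter_image, card_image_of_injective _ ht.injective]
  simp_rw [ht.lt_iff_lt]
  rw [filter_gt_eq_Iio, Fin.card_Iio]

lemma eq_of_card_filter_lt_eq {α : Type*} [LinearOrder α] {T : Finset α} {x x' : α} (hx : x ∈ T)
    (hx' : x' ∈ T) (h : #{y ∈ T | y < x} = #{y ∈ T | y < x'}) : x = x' := by
  have hlt : ∀ {x x'}, x ∈ T → x < x' → #{y ∈ T | y < x} < #{y ∈ T | y < x'} := by
    intro x x' hx hxx'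
    refine card_lt_card ⟨fun y hy => ?_, fun hsub => ?_⟩
    · rw [mem_filter] at hy ⊢; exact ⟨hy.1, hy.2.trans hxx'⟩
    · simpa using (mem_filter.mp (hsub (mem_filter.mpr ⟨hx, hxx'⟩))).2
  rcases lt_trichotomy x x' with h' | h' | h'
  · exact absurd h (hlt hx h').ne
  · exact h'
  · exact absurd h (hlt hx' h').ne'

def partialSumSet (N : ℕ) (b : List ℕ) : Finset (Fin N) :=
  {x | ∃ i < b.length, (b.take i).sum = x}

lemma IsBallot.sum_take_lt {q : ℕ} {b : List ℕ} (hb : IsBallot q N b) {i : ℕ}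
    (hi : i < b.length) : (b.take i).sum < N := by
  have := sum_take_lt_sum_take hb.pos hi le_rfl
  rwa [List.take_of_length_le le_rfl, hb.sum_eq] at this

def IsBallot.partialSum {q : ℕ} {b : List ℕ} (hb : IsBallot q N b) (i : Fin b.length) : Fin N :=
  ⟨(b.take i).sum, hb.sum_take_lt i.2⟩

lemma IsBallot.strictMono_partialSum {q : ℕ} {b : List ℕ} (hb : IsBallot q N b) :
    StrictMono hb.partialSum :=
  fun _ j hij => sum_take_lt_sum_take hb.pos hij j.2.le

lemma IsBallot.image_partialSum {q : ℕ} {b : List ℕ} (hb : IsBallot q N b) :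
    univ.image hb.partialSum = partialSumSet N b := by
  ext x
  simp [partialSumSet, IsBallot.partialSum, Fin.ext_iff, Fin.exists_iff]

lemma IsBallot.card_partialSumSet {q : ℕ} {b : List ℕ} (hb : IsBallot q N b) :
    #(partialSumSet N b) = b.length := by
  rw [← hb.image_partialSum, card_image_of_injective _ hb.strictMono_partialSum.injective,
    card_univ, Fintype.card_fin]

lemma IsBallot.eq_of_partialSumSet_eq {q : ℕ} {b b' : List ℕ} (hb : IsBallot q N b)
    (hb' : IsBallot q N b') (hlen : b.length = b'.length)
    (h : partialSumSet N b = partialSumSet N b') : b = b' := by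
  refine eq_of_sum_take_eq hlen fun i hi => ?_
  rcases hi.lt_or_eq with hi | rfl
  · have hcount := card_filter_lt_image_of_strictMono hb.strictMono_partialSum ⟨i, hi⟩
    have hcount' := card_filter_lt_image_of_strictMono hb'.strictMono_partialSum ⟨i, hlen ▸ hi⟩
    rw [hb.image_partialSum] at hcount
    rw [hb'.image_partialSum, ← h] at hcount'
    have := eq_of_card_filter_lt_eq (hb.image_partialSum ▸ mem_image_of_mem _ (mem_univ _))
      (h ▸ hb'.image_partialSum ▸ mem_image_of_mem _ (mem_univ _)) (hcount.trans hcount'.symm)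
    exact congrArg Fin.val this
  · rw [List.take_of_length_le le_rfl, List.take_of_length_le hlen.ge, hb.sum_eq, hb'.sum_eq]

variable [NeZero N]

lemma isAdmissible_image_iff {q n : ℕ} (hn : 0 < n) {t : Fin n → Fin N} (ht : StrictMono t) :
    IsAdmissible q (univ.image t) ↔ t ⟨0, hn⟩ = 0 ∧ ∀ i, q * i ≤ t i := by
  simp only [IsAdmissible, mem_image, mem_univ, true_and, forall_exists_index,
    forall_apply_eq_imp_iff, card_filter_lt_image_of_strictMono ht]
  refine and_congr_left' ⟨fun ⟨i, hi⟩ => le_antisymm (hi ▸ ht.monotone (Nat.zero_le i))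
    (Fin.zero_le _), fun h => ⟨_, h⟩⟩

lemma IsBallot.isAdmissible_partialSumSet {q : ℕ} {b : List ℕ} (hb : IsBallot q N b)
    (hn : 0 < b.length) : IsAdmissible q (partialSumSet N b) := by
  rw [← hb.image_partialSum, isAdmissible_image_iff hn hb.strictMono_partialSum]
  exact ⟨Fin.ext (by simp [IsBallot.partialSum]), fun i => hb.le_sum_take i i.2⟩

lemma IsAdmissible.exists_isBallot {q n : ℕ} (hn : 0 < n) {T : Finset (Fin N)} (hT : #T = n)
    (hadm : IsAdmissible q T) :
    ∃ b, b.length = n ∧ IsBallot q N b ∧ partialSumSet N b = T := by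
  set t := T.orderEmbOfFin hT
  have hTt : univ.image t = T := T.image_orderEmbOfFin_univ hT
  obtain ⟨ht0, hqt⟩ := (isAdmissible_image_iff hn t.strictMono).mp (hTt ▸ hadm)
  let f : ℕ → ℕ := fun i => if h : i < n then t ⟨i, h⟩ else N
  have hf : ∀ i < n, f i < f (i + 1) := by
    intro i hi
    simp only [f, dif_pos hi]
    split_ifs with h
    · exact t.strictMono (Fin.mk_lt_mk.mpr i.lt_succ_self)
    · exact (t _).2
  obtain ⟨b, hlen, hpos, hsum⟩ := exists_sum_take_eq f n hf (by simp [f, hn, ht0])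
  have hsum_lt : ∀ i (hi : i < n), (b.take i).sum = t ⟨i, hi⟩ := fun i hi => by
    rw [hsum i hi.le]; simp only [f, dif_pos hi]
  refine ⟨b, hlen, ⟨hpos, ?_, fun i hi => ?_⟩, ?_⟩
  · rw [← List.take_of_length_le hlen.le, hsum n le_rfl]; simp [f]
  · rw [hsum_lt i (hlen ▸ hi)]; exact hqt ⟨i, hlen ▸ hi⟩
  · rw [← hTt]
    ext x
    simp only [partialSumSet, mem_filter, mem_univ, true_and, mem_image, hlen]
    constructor
    · rintro ⟨i, hi, hx⟩; exact ⟨⟨i, hi⟩, Fin.ext (by rw [← hx, hsum_lt])⟩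
    · rintro ⟨i, -, rfl⟩; exact ⟨i, i.2, hsum_lt i i.2⟩

end Ballot

theorem card_isBoxPath {k n : ℕ} (hk : 1 ≤ k) (hn : 1 ≤ n) :
    Nat.card {w // IsBoxPath k n w} =
      Nat.card {b : List ℕ // b.length = n ∧ IsBallot (k + 2) ((k + 2) * n - 1) b} := by
  refine (Nat.card_eq_of_bijective (fun b => ⟨boxForm k b.1,
    (isBoxPath_iff hk hn).mpr ⟨b.1, b.2.1, b.2.2, rfl⟩⟩) ⟨fun b b' h => ?_, fun ⟨w, hw⟩ => ?_⟩).symm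
  · exact Subtype.ext (boxForm_injective k (congrArg Subtype.val h))
  · obtain ⟨b, hlen, hb, rfl⟩ := (isBoxPath_iff hk hn).mp hw
    exact ⟨⟨b, hlen, hb⟩, rfl⟩

open Finset in
theorem card_isBallot {q n N : ℕ} [NeZero N] (hn : 0 < n) :
    Nat.card {b : List ℕ // b.length = n ∧ IsBallot q N b} =
      #{T ∈ powersetCard n (univ : Finset (Fin N)) | IsAdmissible q T} := by
  rw [← Nat.card_eq_finsetCard]
  refine Nat.card_eq_of_bijective (fun b => ⟨partialSumSet N b.1, ?_⟩) ⟨fun b b' h => ?_, ?_⟩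
  · obtain ⟨b, hlen, hb⟩ := b
    simp only [mem_filter, mem_powersetCard, subset_univ, true_and]
    exact ⟨hb.card_partialSumSet.trans hlen, hb.isAdmissible_partialSumSet (hlen ▸ hn)⟩
  · obtain ⟨b, hlen, hb⟩ := b
    obtain ⟨b', hlen', hb'⟩ := b'
    exact Subtype.ext (hb.eq_of_partialSumSet_eq hb' (hlen.trans hlen'.symm)
      (congrArg Subtype.val h))
  · rintro ⟨T, hT⟩
    simp only [mem_filter, mem_powersetCard, subset_univ, true_and] at hT
    obtain ⟨b, hlen, hb, rfl⟩ := hT.2.exists_isBallot hn hT.1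
    exact ⟨⟨b, hlen, hb⟩, rfl⟩

/-- The number of `k`-box paths of size `n` is `binom((k+2)n-1, n) / ((k+2)n-1)`. -/
theorem statement3 (k n : ℕ) (hk : 1 ≤ k) (hn : 1 ≤ n) :
    ((k+2)*n - 1) * Nat.card {w : List Step // IsBoxPath k n w} =
      Nat.choose ((k+2)*n - 1) n := by
  have hqn : (k + 2) * n = (k + 2) * n - 1 + 1 := by
    have := Nat.mul_le_mul (show 1 ≤ k + 2 by omega) hn; omega
  have : NeZero ((k + 2) * n - 1) := ⟨by nlinarith⟩
  rw [card_isBoxPath hk hn, card_isBallot hn, card_mul_card_isAdmissible hqn]
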